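/- arXiv:1902.07389 — 3 statements merged into one kernel-verified Lean document; each statement's English description precedes it below -/
import Mathlib

section
/- Let K(t,x) = (2πt)^{-d/2} exp(−|x|²/(2t)). There exists a constant C₃ > 0 (depending only on d) such that for all 0 < s < t and all y ∈ ℝ^d, ∫_{ℝ^d} K(t,x) K(t−s, x−y)² dx ≥ C₃ K(s,y) · s^{d/2} / (t^{d/2} (t−s)^{d/2}). -/
open Real MeasureTheory

private lemma gauss_integrable (d : ℕ) {b : ℝ} (hb : 0 < b) :
    Integrable (fun x : EuclideanSpace ℝ (Fin d) => Real.exp (-b * ‖x‖ ^ 2)) := by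
  have h := (GaussianFourier.integrable_cexp_neg_mul_sq_norm_add
      (b := (b : ℂ)) (by simpa using hb) 0 (0 : EuclideanSpace ℝ (Fin d))).norm
  simpa [Complex.norm_exp, ← Complex.ofReal_pow] using h

private lemma split_sq (a b s t : ℝ) (ha : 0 ≤ a) (hb : 0 ≤ b) (hs : 0 < s) (hst : s < t) :
    (a + b) ^ 2 / (2 * t) ≤ a ^ 2 / (2 * s) + b ^ 2 / (2 * (t - s)) := by
  have hts : 0 < t - s := by linarith
  have ht : 0 < t := lt_trans hs hst
  rw [div_add_div _ _ (by positivity) (by positivity),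
    div_le_div_iff₀ (by positivity) (by positivity)]
  nlinarith [sq_nonneg (a * (t - s) - b * s)]

set_option maxHeartbeats 1000000 in
/-- Kernel product estimate: ∫ K(t,x) K(t-s,x-y)² dx ≥ C₃ K(s,y) s^{d/2}/(t^{d/2}(t-s)^{d/2}). -/
theorem stmt_8 (d : ℕ) (hd : 0 < d) :
    ∃ C₃ > 0, ∀ s t : ℝ, 0 < s → s < t → ∀ y : EuclideanSpace ℝ (Fin d),
      C₃ * ((2 * π * s) ^ (-(d : ℝ) / 2) * Real.exp (-‖y‖ ^ 2 / (2 * s))) *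
        s ^ ((d : ℝ) / 2) / (t ^ ((d : ℝ) / 2) * (t - s) ^ ((d : ℝ) / 2)) ≤
      ∫ x : EuclideanSpace ℝ (Fin d),
        ((2 * π * t) ^ (-(d : ℝ) / 2) * Real.exp (-‖x‖ ^ 2 / (2 * t))) *
          ((2 * π * (t - s)) ^ (-(d : ℝ) / 2) * Real.exp (-‖x - y‖ ^ 2 / (2 * (t - s)))) ^ 2 := by
  have hπ := Real.pi_pos
  refine ⟨(6 * π) ^ (-(d : ℝ) / 2), by positivity, ?_⟩
  intro s t hs hst y
  have hts : 0 < t - s := by linarith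
  have ht : 0 < t := hs.trans hst
  set b3 : ℝ := 3 / (2 * (t - s)) with hb3def
  have hb3 : 0 < b3 := by positivity
  set Ct : ℝ := (2 * π * t) ^ (-(d : ℝ) / 2) with hCt
  set Cs : ℝ := (2 * π * (t - s)) ^ (-(d : ℝ) / 2) with hCs
  have hCt0 : 0 < Ct := by positivity
  have hCs0 : 0 < Cs := by positivity
  set E : ℝ := Real.exp (-‖y‖ ^ 2 / (2 * s)) with hE
  have hE0 : 0 < E := Real.exp_pos _
  set A : ℝ := Ct * Cs ^ 2 * E with hA
  have hA0 : 0 < A := by positivity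
  -- pointwise bound
  have key : ∀ x : EuclideanSpace ℝ (Fin d),
      A * Real.exp (-b3 * ‖x - y‖ ^ 2) ≤
      (Ct * Real.exp (-‖x‖ ^ 2 / (2 * t))) *
        (Cs * Real.exp (-‖x - y‖ ^ 2 / (2 * (t - s)))) ^ 2 := by
    intro x
    have hxn : ‖x‖ ^ 2 / (2 * t) ≤ ‖y‖ ^ 2 / (2 * s) + ‖x - y‖ ^ 2 / (2 * (t - s)) := by
      refine le_trans ?_ (split_sq ‖y‖ ‖x - y‖ s t (norm_nonneg _) (norm_nonneg _) hs hst)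
      have hx : ‖x‖ ≤ ‖y‖ + ‖x - y‖ := by
        calc ‖x‖ = ‖y + (x - y)‖ := by congr 1; abel
        _ ≤ ‖y‖ + ‖x - y‖ := norm_add_le _ _
      gcongr
    have hexp : E * Real.exp (-b3 * ‖x - y‖ ^ 2) ≤
        Real.exp (-‖x‖ ^ 2 / (2 * t)) * Real.exp (-‖x - y‖ ^ 2 / (2 * (t - s))) ^ 2 := by
      have hmulsq : ∀ a b : ℝ, Real.exp a * Real.exp b ^ 2 = Real.exp (a + (b + b)) := by
        intro a b; rw [sq, ← Real.exp_add, ← Real.exp_add]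
      rw [hE, ← Real.exp_add, hmulsq]
      apply Real.exp_le_exp.2
      have h3 : -b3 * ‖x - y‖ ^ 2 =
          -(‖x - y‖ ^ 2 / (2 * (t - s))) - ‖x - y‖ ^ 2 / (2 * (t - s))
            - ‖x - y‖ ^ 2 / (2 * (t - s)) := by
        rw [hb3def]; field_simp; ring
      rw [h3]
      simp only [neg_div]
      linarith [hxn]
    calc A * Real.exp (-b3 * ‖x - y‖ ^ 2)
        = Ct * Cs ^ 2 * (E * Real.exp (-b3 * ‖x - y‖ ^ 2)) := by rw [hA]; ring
      _ ≤ Ct * Cs ^ 2 * (Real.exp (-‖x‖ ^ 2 / (2 * t)) *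
            Real.exp (-‖x - y‖ ^ 2 / (2 * (t - s))) ^ 2) :=
          mul_le_mul_of_nonneg_left hexp (by positivity)
      _ = (Ct * Real.exp (-‖x‖ ^ 2 / (2 * t))) *
            (Cs * Real.exp (-‖x - y‖ ^ 2 / (2 * (t - s)))) ^ 2 := by ring
  -- integrability of the lower bound
  have hint_g0 : Integrable (fun x : EuclideanSpace ℝ (Fin d) => Real.exp (-b3 * ‖x - y‖ ^ 2)) := by
    have := (gauss_integrable d hb3).comp_sub_right y
    simpa using this
  have hint_g : Integrable (fun x : EuclideanSpace ℝ (Fin d) => A * Real.exp (-b3 * ‖x - y‖ ^ 2)) :=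
    hint_g0.const_mul A
  -- integrability of the integrand
  have hint_f : Integrable (fun x : EuclideanSpace ℝ (Fin d) =>
      (Ct * Real.exp (-‖x‖ ^ 2 / (2 * t))) *
        (Cs * Real.exp (-‖x - y‖ ^ 2 / (2 * (t - s)))) ^ 2) := by
    have hbt : (0 : ℝ) < 1 / (2 * t) := by positivity
    have hmaj : Integrable (fun x : EuclideanSpace ℝ (Fin d) => Ct * Cs ^ 2 * Real.exp (-(1 / (2 * t)) * ‖x‖ ^ 2)) :=
      (gauss_integrable d hbt).const_mul _
    refine hmaj.mono ?_ ?_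
    · apply Continuous.aestronglyMeasurable
      fun_prop
    · filter_upwards with x
      have h1 : Real.exp (-‖x - y‖ ^ 2 / (2 * (t - s))) ≤ 1 := by
        apply Real.exp_le_one_iff.2
        rw [neg_div]
        exact neg_nonpos.2 (by positivity)
      have h2 : (0:ℝ) < Real.exp (-‖x - y‖ ^ 2 / (2 * (t - s))) := Real.exp_pos _
      rw [Real.norm_eq_abs, Real.norm_eq_abs, abs_of_nonneg (by positivity),
        abs_of_nonneg (by positivity)]
      have heq : -(1 / (2 * t)) * ‖x‖ ^ 2 = -‖x‖ ^ 2 / (2 * t) := by ring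
      rw [heq]
      calc Ct * Real.exp (-‖x‖ ^ 2 / (2 * t)) *
            (Cs * Real.exp (-‖x - y‖ ^ 2 / (2 * (t - s)))) ^ 2
          = Ct * Cs ^ 2 * Real.exp (-‖x‖ ^ 2 / (2 * t)) *
              Real.exp (-‖x - y‖ ^ 2 / (2 * (t - s))) ^ 2 := by ring
        _ ≤ Ct * Cs ^ 2 * Real.exp (-‖x‖ ^ 2 / (2 * t)) * 1 ^ 2 := by
            gcongr
        _ = Ct * Cs ^ 2 * Real.exp (-‖x‖ ^ 2 / (2 * t)) := by ring
  have hmono := integral_mono hint_g hint_f key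
  -- compute the lower integral
  have hcomp : ∫ x : EuclideanSpace ℝ (Fin d), A * Real.exp (-b3 * ‖x - y‖ ^ 2) =
      A * (π / b3) ^ ((d : ℝ) / 2) := by
    rw [integral_const_mul]
    congr 1
    have htrans : ∫ x : EuclideanSpace ℝ (Fin d), Real.exp (-b3 * ‖x - y‖ ^ 2) =
        ∫ x : EuclideanSpace ℝ (Fin d), Real.exp (-b3 * ‖x‖ ^ 2) := by
      exact integral_sub_right_eq_self (fun x => Real.exp (-b3 * ‖x‖ ^ 2)) y
    rw [htrans, GaussianFourier.integral_rexp_neg_mul_sq_norm hb3,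
      finrank_euclideanSpace_fin]
  refine le_trans (le_of_eq ?_) (le_trans (le_of_eq hcomp.symm) hmono)
  -- arithmetic identity
  have hπb : π / b3 = 2 * π * (t - s) / 3 := by
    rw [hb3def]; field_simp
  rw [hπb, hA, hCt, hCs]
  set e : ℝ := (d : ℝ) / 2 with he
  have hneg : -(d : ℝ) / 2 = -e := by rw [he]; ring
  rw [hneg]
  have hr : ∀ x : ℝ, 0 < x → x ^ (-e) = (x ^ e)⁻¹ := fun x hx => Real.rpow_neg hx.le e
  have hm : ∀ x z : ℝ, 0 ≤ x → 0 ≤ z → (x * z) ^ e = x ^ e * z ^ e :=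
    fun x z hx hz => Real.mul_rpow hx hz
  have hm' : ∀ x z : ℝ, 0 ≤ x → 0 ≤ z → (x * z) ^ (-e) = x ^ (-e) * z ^ (-e) :=
    fun x z hx hz => Real.mul_rpow hx hz
  have h6 : ((6 : ℝ) * π) ^ (-e) = (2:ℝ) ^ (-e) * (3:ℝ) ^ (-e) * π ^ (-e) := by
    rw [show (6:ℝ) * π = 2 * 3 * π by ring, hm' _ _ (by norm_num) hπ.le,
      hm' _ _ (by norm_num) (by norm_num)]
  have h2πs : ((2:ℝ) * π * s) ^ (-e) = (2:ℝ) ^ (-e) * π ^ (-e) * s ^ (-e) := by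
    rw [hm' _ _ (by positivity) hs.le, hm' _ _ (by norm_num) hπ.le]
  have h2πt : ((2:ℝ) * π * t) ^ (-e) = (2:ℝ) ^ (-e) * π ^ (-e) * t ^ (-e) := by
    rw [hm' _ _ (by positivity) ht.le, hm' _ _ (by norm_num) hπ.le]
  have h2πts : ((2:ℝ) * π * (t - s)) ^ (-e) = (2:ℝ) ^ (-e) * π ^ (-e) * (t - s) ^ (-e) := by
    rw [hm' _ _ (by positivity) hts.le, hm' _ _ (by norm_num) hπ.le]
  have hdiv : ((2:ℝ) * π * (t - s) / 3) ^ e =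
      (2:ℝ) ^ e * π ^ e * (t - s) ^ e / (3:ℝ) ^ e := by
    rw [Real.div_rpow (by positivity) (by norm_num), hm _ _ (by positivity) hts.le,
      hm _ _ (by norm_num) hπ.le]
  rw [h6, h2πs, h2πt, h2πts, hdiv]
  rw [hr 2 (by norm_num), hr 3 (by norm_num), hr π hπ, hr s hs, hr t ht, hr (t - s) hts]
  have p2 : (0:ℝ) < (2:ℝ) ^ e := by positivity
  have p3 : (0:ℝ) < (3:ℝ) ^ e := by positivity
  have pπ : (0:ℝ) < π ^ e := by positivity
  have ps : (0:ℝ) < s ^ e := by positivity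
  have pt : (0:ℝ) < t ^ e := by positivity
  have pts : (0:ℝ) < (t - s) ^ e := by positivity
  field_simp
end

section
/- Let m ≥ 2, d ≥ 1 and suppose g : [1,∞) → ℝ is differentiable with g(t) ≥ C₂ t^{(m−2)d/2} and g'(t) ≥ C₃ t^{(1−m)md/2} g(t)^m for all t ≥ 1, where C₂, C₃ > 0. If (m−1)m d/2 ≤ 1, then g cannot exist on all of [1,∞) (it must blow up in finite time). -/
/-- No global solution of g' ≥ C₃ t^{(1-m)md/2} g^m with g ≥ C₂ t^{(m-2)d/2}
can exist on [1,∞) when m ≥ 2 and (m-1)md/2 ≤ 1. -/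
theorem stmt_11 (d : ℕ) (hd : 1 ≤ d) (m C₂ C₃ : ℝ) (hm : 2 ≤ m)
    (hC₂ : 0 < C₂) (hC₃ : 0 < C₃) (hcrit : (m - 1) * m * d / 2 ≤ 1)
    (g g' : ℝ → ℝ)
    (hdiff : ∀ t ≥ (1:ℝ), HasDerivAt g (g' t) t)
    (hlb : ∀ t ≥ (1:ℝ), C₂ * t ^ ((m - 2) * d / 2) ≤ g t)
    (hineq : ∀ t ≥ (1:ℝ), C₃ * t ^ ((1 - m) * m * d / 2) * g t ^ m ≤ g' t) :
    False := by
  have hd1 : (1:ℝ) ≤ (d:ℝ) := by exact_mod_cast hd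
  -- Criticality forces m = 2 and d = 1.
  have hm2 : m = 2 := by nlinarith [mul_pos (by linarith : (0:ℝ) < m - 1) (by linarith : (0:ℝ) < m)]
  subst hm2
  have hdd : (d:ℝ) = 1 := le_antisymm (by linarith) hd1
  have hexp1 : ((2:ℝ) - 2) * d / 2 = 0 := by rw [hdd]; ring
  have hexp2 : ((1:ℝ) - 2) * 2 * d / 2 = -1 := by rw [hdd]; ring
  -- positivity of g on [1,∞)
  have hgpos : ∀ t ≥ (1:ℝ), 0 < g t := by
    intro t ht
    have := hlb t ht
    rw [hexp1, Real.rpow_zero, mul_one] at this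
    linarith
  -- the derivative inequality in the simplified form
  have hkey : ∀ t ≥ (1:ℝ), C₃ * t⁻¹ * g t ^ 2 ≤ g' t := by
    intro t ht
    have h := hineq t ht
    rw [hexp2] at h
    have ht0 : (0:ℝ) < t := by linarith
    rw [Real.rpow_neg_one] at h
    have h2 : g t ^ (2:ℝ) = g t ^ (2:ℕ) := by
      rw [show ((2:ℝ)) = ((2:ℕ):ℝ) by norm_num, Real.rpow_natCast]
    rw [h2] at h
    exact_mod_cast h
  -- φ t = C₃ log t + 1/g t is nonincreasing on [1,∞)
  set φ : ℝ → ℝ := fun t => C₃ * Real.log t + (g t)⁻¹ with hφ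
  have hφderiv : ∀ t ≥ (1:ℝ), HasDerivAt φ (C₃ * t⁻¹ + (-(g' t) / g t ^ 2)) t := by
    intro t ht
    have ht0 : t ≠ 0 := by intro h; rw [h] at ht; linarith
    exact ((Real.hasDerivAt_log ht0).const_mul C₃).add ((hdiff t ht).inv (ne_of_gt (hgpos t ht)))
  have hanti : AntitoneOn φ (Set.Ici 1) := by
    apply antitoneOn_of_deriv_nonpos (convex_Ici 1)
    · intro t ht
      exact (hφderiv t ht).continuousAt.continuousWithinAt
    · intro t ht
      rw [interior_Ici] at ht
      exact (hφderiv t (le_of_lt ht)).differentiableAt.differentiableWithinAt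
    · intro t ht
      rw [interior_Ici] at ht
      have ht1 : (1:ℝ) ≤ t := le_of_lt ht
      rw [(hφderiv t ht1).deriv]
      have hk := hkey t ht1
      have hg2 : (0:ℝ) < g t ^ 2 := pow_pos (hgpos t ht1) 2
      have : C₃ * t⁻¹ ≤ g' t / g t ^ 2 := by
        rw [le_div_iff₀ hg2]
        linarith
      have : -(g' t) / g t ^ 2 ≤ -(C₃ * t⁻¹) := by
        rw [neg_div]
        linarith
      linarith
  -- evaluate at large T
  set T : ℝ := Real.exp ((1/C₂ + 1)/C₃) with hT
  have hargpos : 0 ≤ (1/C₂ + 1)/C₃ := by positivity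
  have hT1 : (1:ℝ) ≤ T := Real.one_le_exp hargpos
  have h1 : φ T ≤ φ 1 := hanti (by simp) (by simpa using hT1) hT1
  have hφ1 : φ 1 ≤ 1/C₂ := by
    have hg1 := hlb 1 (le_refl 1)
    rw [hexp1, Real.rpow_zero, mul_one] at hg1
    have : (g 1)⁻¹ ≤ C₂⁻¹ := by
      apply inv_anti₀ hC₂ hg1
    simp only [hφ, Real.log_one, mul_zero, zero_add]
    rw [one_div]
    exact this
  have hlogT : Real.log T = (1/C₂ + 1)/C₃ := Real.log_exp _
  have hφT : 1/C₂ + 1 ≤ φ T := by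
    have hginv : 0 < (g T)⁻¹ := inv_pos.mpr (hgpos T hT1)
    have : C₃ * Real.log T = 1/C₂ + 1 := by
      rw [hlogT]; field_simp
    simp only [hφ]
    rw [this]
    linarith
  have hend : (1:ℝ)/C₂ + 1 ≤ 1/C₂ := le_trans hφT (le_trans h1 hφ1)
  linarith
end

section
/- Let v : [0,∞) → ℝ be continuous with v(t) = v₀ + ∫₀ᵗ h(s) ds where h is continuous, and suppose there exist δ > 0 and a continuous function J with h(t) ≥ 4(1+δ) J(t) for all t, and J(t) ≥ J(0) > 0 for all t ≥ 0. Define I(t) = ∫₀ᵗ v(s) ds + A for a constant A > 0. If additionally I'(t)² ≤ 4(1+ε)P(t)Q(t) + (1+ε)^{-1} R² where P(t) = ∫₀ᵗ p, Q(t) = ∫₀ᵗ q with p, q ≥ 0 continuous, J(t) ≥ J(0) + P(t), I(t) ≥ Q(t) + A, and (1+δ) > (1+α)(1+ε) for some α, ε > 0, then for A sufficiently large, I''(t) I(t) − (1+α) I'(t)² > 0 for all t ≥ 0. -/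
open intervalIntegral

/-- Key algebraic step of the stochastic concavity method (Theorem 2.2):
with I(t) = ∫₀ᵗ v + A, I' = v, I'' = h ≥ 4(1+δ)J, and the stated comparisons,
for A sufficiently large we get I''(t)I(t) − (1+α)I'(t)² > 0 for all t ≥ 0. -/
theorem stmt_15 (v h J p q : ℝ → ℝ) (v₀ R α δ ε : ℝ)
    (hδ : 0 < δ) (hα : 0 < α) (hε : 0 < ε) (hR : 0 ≤ R)
    (hcv : Continuous v) (hch : Continuous h) (hcJ : Continuous J)
    (hcp : Continuous p) (hcq : Continuous q)
    (hpnn : ∀ t : ℝ, 0 ≤ p t) (hqnn : ∀ t : ℝ, 0 ≤ q t)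
    (hv : ∀ t ≥ (0:ℝ), v t = v₀ + ∫ s in (0:ℝ)..t, h s)
    (hhJ : ∀ t ≥ (0:ℝ), 4 * (1 + δ) * J t ≤ h t)
    (hJ0 : 0 < J 0)
    (hJmono : ∀ t ≥ (0:ℝ), J 0 ≤ J t)
    (hJP : ∀ t ≥ (0:ℝ), J 0 + (∫ s in (0:ℝ)..t, p s) ≤ J t)
    (hIQ : ∀ t ≥ (0:ℝ), (∫ s in (0:ℝ)..t, q s) ≤ ∫ s in (0:ℝ)..t, v s)
    (hsq : ∀ t ≥ (0:ℝ), (v t) ^ 2 ≤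
      4 * (1 + ε) * (∫ s in (0:ℝ)..t, p s) * (∫ s in (0:ℝ)..t, q s) + (1 + ε)⁻¹ * R ^ 2)
    (hde : (1 + α) * (1 + ε) < 1 + δ) :
    ∃ A₀ > 0, ∀ A ≥ A₀, ∀ t ≥ (0:ℝ),
      (1 + α) * (v t) ^ 2 < h t * ((∫ s in (0:ℝ)..t, v s) + A) := by

  have h1δ : (0:ℝ) < 1 + δ := by linarith
  have h1ε : (0:ℝ) < 1 + ε := by linarith
  have hεinv : 0 < (1 + ε)⁻¹ := inv_pos.mpr h1ε
  have hd : 0 < 4 * (1 + δ) * J 0 := by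
    have : (0:ℝ) < 4 * (1 + δ) := by linarith
    exact mul_pos this hJ0
  set c := (1 + α) * (1 + ε)⁻¹ * R ^ 2 with hc
  have hcnn : 0 ≤ c := by
    have : 0 ≤ (1 + α) * (1 + ε)⁻¹ := by positivity
    positivity
  refine ⟨c / (4 * (1 + δ) * J 0) + 1, by positivity, ?_⟩
  intro A hA t ht
  have hP : 0 ≤ ∫ s in (0:ℝ)..t, p s :=
    intervalIntegral.integral_nonneg ht (fun x _ => hpnn x)
  have hQ : 0 ≤ ∫ s in (0:ℝ)..t, q s :=
    intervalIntegral.integral_nonneg ht (fun x _ => hqnn x)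
  set P := ∫ s in (0:ℝ)..t, p s
  set Q := ∫ s in (0:ℝ)..t, q s
  set V := ∫ s in (0:ℝ)..t, v s
  have h1 := hhJ t ht
  have h2 := hJP t ht
  have h3 := hIQ t ht
  have h4 := hsq t ht
  have hApos : c / (4 * (1 + δ) * J 0) < A := by
    have : 0 ≤ c / (4 * (1 + δ) * J 0) := div_nonneg hcnn hd.le
    linarith
  have hcA : c < 4 * (1 + δ) * J 0 * A := by
    have := (div_lt_iff₀ hd).mp hApos
    linarith [this]
  -- key algebraic chain
  have hVA : 0 < V + A := by
    have : 0 < A := by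
      have : 0 ≤ c / (4 * (1 + δ) * J 0) := div_nonneg hcnn hd.le
      linarith
    linarith
  have hJt : 0 < J t := lt_of_lt_of_le hJ0 (hJmono t ht)
  have step1 : 4 * (1 + δ) * J t * (V + A) ≤ h t * (V + A) :=
    mul_le_mul_of_nonneg_right h1 hVA.le
  have hA0 : 0 < A := by
    have : 0 ≤ c / (4 * (1 + δ) * J 0) := div_nonneg hcnn hd.le
    linarith
  have step2 : 4 * (1 + δ) * (J 0 + P) * (Q + A) ≤ 4 * (1 + δ) * J t * (V + A) := by
    have hQA : (0:ℝ) ≤ Q + A := by linarith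
    have hm : (J 0 + P) * (Q + A) ≤ J t * (V + A) :=
      mul_le_mul h2 (by linarith) hQA (by linarith)
    have := mul_le_mul_of_nonneg_left hm (by linarith : (0:ℝ) ≤ 4 * (1 + δ))
    linarith [this]
  have step3 : (1 + α) * v t ^ 2 < 4 * (1 + δ) * (J 0 + P) * (Q + A) := by
    have hεeq : (1 + ε) * (1 + ε)⁻¹ = 1 := mul_inv_cancel₀ (ne_of_gt h1ε)
    have e0 := mul_le_mul_of_nonneg_left h4 (show (0:ℝ) ≤ 1 + α by linarith)
    have e1 : (1 + α) * v t ^ 2 ≤ 4 * ((1 + α) * (1 + ε)) * (P * Q) + c := by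
      rw [hc]; linarith [e0]
    have e2 : 4 * ((1 + α) * (1 + ε)) * (P * Q) ≤ 4 * (1 + δ) * (P * Q) := by
      have hPQ : 0 ≤ P * Q := mul_nonneg hP hQ
      nlinarith [hPQ]
    have e3 : P * Q + J 0 * A ≤ (J 0 + P) * (Q + A) := by
      nlinarith [mul_nonneg hJ0.le hQ, mul_nonneg hP hA0.le]
    have e4 := mul_le_mul_of_nonneg_left e3 (by linarith : (0:ℝ) ≤ 4 * (1 + δ))
    linarith [e1, e2, e4, hcA]
  linarith
end
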